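/- Let μ be a finite Borel measure on ℝ and λ > 0, and set F(x) = ∫_ℝ G_λ(y − x) μ(dy). Then for every x ∈ ℝ, F has a left derivative at x and it equals ∫_ℝ g_λ(x − y) μ(dy) + μ({x}); that is, lim_{h→0−} (F(x+h) − F(x))/h = ∫_ℝ g_λ(x − y) μ(dy) + μ({x}). -/

import Mathlib

open MeasureTheory Filter Set

/-- `G_λ(x) = (2λ)^{-1/2} · exp(-√(2λ)·|x|)`. -/
noncomputable def Gl (l : ℝ) (x : ℝ) : ℝ :=
  (2 * l) ^ (-(1/2 : ℝ)) * Real.exp (-Real.sqrt (2 * l) * |x|)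

/-- `g_λ(x) = -sgn(x) · exp(-√(2λ)·|x|)`. -/
noncomputable def gl (l : ℝ) (x : ℝ) : ℝ :=
  -Real.sign x * Real.exp (-Real.sqrt (2 * l) * |x|)

/-!
Since `G_λ` is `1`-Lipschitz, the difference quotients of `F` are integrals of functions bounded
by `1`, and dominated convergence reduces the claim to the pointwise left derivative of
`h ↦ G_λ(y - x - h)` at `0`. For `y ≠ x` this is `-G_λ'(y - x) = g_λ(x - y)`; for `y = x` it is
the left derivative of `G_λ(-h)` at the kink, which is `1`, and integrating these `1`s over
`{x}` produces the atom `μ({x})`.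
-/

open scoped NNReal Topology

theorem Real.measurable_sign : Measurable Real.sign :=
  Measurable.ite (measurableSet_lt measurable_id measurable_const) measurable_const <|
    Measurable.ite (measurableSet_lt measurable_const measurable_id) measurable_const
      measurable_const

theorem tendsto_slope_integral_of_lipschitzWith {α : Type*} [MeasurableSpace α] {μ : Measure α}
    [IsFiniteMeasure μ] {k : ℝ → α → ℝ} {K : ℝ≥0} (hk : ∀ y, LipschitzWith K (k · y))
    (hint : ∀ x, Integrable (k x) μ) {L : Filter ℝ} [L.IsCountablyGenerated] {x : ℝ}
    {f : α → ℝ} (hf : ∀ᵐ y ∂μ, Tendsto (fun h => (k (x + h) y - k x y) / h) L (𝓝 (f y))) :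
    Tendsto (fun h => ((∫ y, k (x + h) y ∂μ) - ∫ y, k x y ∂μ) / h) L (𝓝 (∫ y, f y ∂μ)) := by
  have hslope : (fun h => ((∫ y, k (x + h) y ∂μ) - ∫ y, k x y ∂μ) / h) =
      fun h => ∫ y, (k (x + h) y - k x y) / h ∂μ := by
    funext h
    rw [integral_div, integral_sub (hint _) (hint _)]
  rw [hslope]
  refine tendsto_integral_filter_of_dominated_convergence (fun _ => (K : ℝ))
    (Eventually.of_forall fun h => (((hint (x + h)).sub (hint x)).div_const h).aestronglyMeasurable)
    (Eventually.of_forall fun h => ae_of_all _ fun y => ?_) (integrable_const _) hf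
  rcases eq_or_ne h 0 with rfl | hh
  · simp
  rw [norm_div, div_le_iff₀ (norm_pos_iff.2 hh)]
  simpa [Real.dist_eq] using (hk y).dist_le_mul (x + h) x

section Kernel

variable {l : ℝ}

theorem hasDerivAt_const_mul_exp_mul (c a t : ℝ) :
    HasDerivAt (fun t => c * Real.exp (a * t)) (c * a * Real.exp (a * t)) t := by
  refine ((((hasDerivAt_id t).const_mul a).exp).const_mul c).congr_deriv ?_
  simp only [id, mul_one]
  ring

theorem Real.exp_neg_mul_le_one {a t : ℝ} (ha : 0 ≤ a) (ht : 0 ≤ t) :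
    Real.exp (-a * t) ≤ 1 := by
  rw [Real.exp_le_one_iff, neg_mul]
  exact neg_nonpos.2 (mul_nonneg ha ht)

theorem Gl_eq (hl : 0 ≤ l) (u : ℝ) :
    Gl l u = (√(2 * l))⁻¹ * Real.exp (-√(2 * l) * |u|) := by
  rw [Gl, Real.rpow_neg (by linarith), ← Real.sqrt_eq_rpow]

theorem Gl_of_nonneg (hl : 0 ≤ l) {u : ℝ} (hu : 0 ≤ u) :
    Gl l u = (√(2 * l))⁻¹ * Real.exp (-√(2 * l) * u) := by
  rw [Gl_eq hl, abs_of_nonneg hu]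

theorem Gl_of_nonpos (hl : 0 ≤ l) {u : ℝ} (hu : u ≤ 0) :
    Gl l u = (√(2 * l))⁻¹ * Real.exp (√(2 * l) * u) := by
  rw [Gl_eq hl, abs_of_nonpos hu, neg_mul_neg]

theorem norm_Gl_le (hl : 0 ≤ l) (u : ℝ) : ‖Gl l u‖ ≤ (√(2 * l))⁻¹ := by
  have hexp := Real.exp_neg_mul_le_one (Real.sqrt_nonneg (2 * l)) (abs_nonneg u)
  rw [Gl_eq hl, norm_mul, norm_inv, Real.norm_of_nonneg (Real.sqrt_nonneg _),
    Real.norm_of_nonneg (Real.exp_pos _).le]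
  exact mul_le_of_le_one_right (by positivity) hexp

theorem abs_gl_le_one (u : ℝ) : |gl l u| ≤ 1 := by
  have hsign : |Real.sign u| ≤ 1 := by
    rcases Real.sign_apply_eq u with h | h | h <;> simp [h]
  have hexp := Real.exp_neg_mul_le_one (Real.sqrt_nonneg (2 * l)) (abs_nonneg u)
  rw [gl, abs_mul, abs_neg, abs_of_pos (Real.exp_pos _)]
  exact mul_le_one₀ hsign (Real.exp_pos _).le hexp

theorem measurable_gl (l : ℝ) : Measurable (gl l) :=
  Real.measurable_sign.neg.mul (by fun_prop)

theorem gl_neg (u : ℝ) : gl l (-u) = -gl l u := by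
  simp [gl, Real.sign_neg]

theorem lipschitzWith_Gl (hl : 0 < l) : LipschitzWith 1 (Gl l) := by
  set a := √(2 * l)
  have ha : 0 < a := Real.sqrt_pos.2 (by linarith)
  have hψ : LipschitzOnWith 1 (fun t => a⁻¹ * Real.exp (-a * t)) (Ici 0) := by
    refine (convex_Ici 0).lipschitzOnWith_of_nnnorm_hasDerivWithin_le
      (fun t _ => (hasDerivAt_const_mul_exp_mul _ _ t).hasDerivWithinAt) fun t ht => ?_
    have hderiv : a⁻¹ * -a * Real.exp (-a * t) = -Real.exp (-a * t) := by field_simp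
    rw [← NNReal.coe_le_coe, coe_nnnorm, NNReal.coe_one, hderiv, norm_neg,
      Real.norm_of_nonneg (Real.exp_pos _).le]
    exact Real.exp_neg_mul_le_one ha.le ht
  have hGl : Gl l = (fun t => a⁻¹ * Real.exp (-a * t)) ∘ norm :=
    funext fun u => by rw [Gl_eq hl.le, Function.comp_apply, Real.norm_eq_abs]
  rw [hGl, ← lipschitzOnWith_univ, ← mul_one (1 : ℝ≥0)]
  exact hψ.comp (lipschitzWith_one_norm (E := ℝ)).lipschitzOnWith (fun u _ => norm_nonneg u)

-- The indicator is needed at the kink: `gl l 0 = 0`, but the right derivative there is `-1`.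
theorem hasDerivWithinAt_Gl_Ici (hl : 0 < l) (u : ℝ) :
    HasDerivWithinAt (Gl l) (gl l u - ({0} : Set ℝ).indicator 1 u) (Ici u) u := by
  have ha : 0 < √(2 * l) := Real.sqrt_pos.2 (by linarith)
  rcases lt_or_ge u 0 with hu | hu
  · have hloc : (fun v => (√(2 * l))⁻¹ * Real.exp (√(2 * l) * v)) =ᶠ[𝓝 u] Gl l := by
      filter_upwards [Iio_mem_nhds hu] with v hv
      rw [Gl_of_nonpos hl.le hv.le]
    have hval : (√(2 * l))⁻¹ * √(2 * l) * Real.exp (√(2 * l) * u) =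
        gl l u - ({0} : Set ℝ).indicator 1 u := by
      rw [inv_mul_cancel₀ ha.ne']
      simp [gl, Real.sign_of_neg hu, abs_of_neg hu, hu.ne]
    rw [← hval]
    exact ((hasDerivAt_const_mul_exp_mul _ _ u).congr_of_eventuallyEq hloc.symm).hasDerivWithinAt
  · have hval : (√(2 * l))⁻¹ * -√(2 * l) * Real.exp (-√(2 * l) * u) =
        gl l u - ({0} : Set ℝ).indicator 1 u := by
      rw [mul_neg, inv_mul_cancel₀ ha.ne']
      rcases hu.eq_or_lt with rfl | hu
      · simp [gl]
      · simp [gl, Real.sign_of_pos hu, abs_of_pos hu, hu.ne']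
    rw [← hval]
    exact (hasDerivAt_const_mul_exp_mul _ _ u).hasDerivWithinAt.congr_of_mem
      (fun v hv => Gl_of_nonneg hl.le (hu.trans hv)) self_mem_Ici

theorem tendsto_slope_Gl_sub_nhdsLT (hl : 0 < l) (x y : ℝ) :
    Tendsto (fun h => (Gl l (y - (x + h)) - Gl l (y - x)) / h) (𝓝[<] 0)
      (𝓝 (gl l (x - y) + ({x} : Set ℝ).indicator 1 y)) := by
  have hshift : HasDerivWithinAt (fun h : ℝ => y - (x + h)) (-1) (Iic 0) 0 :=
    ((hasDerivAt_id' 0).const_add x).const_sub y |>.hasDerivWithinAt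
  have hd := (hasDerivWithinAt_Gl_Ici hl (y - x)).comp_of_eq 0 hshift
    (fun h (hh : h ≤ 0) => show y - x ≤ y - (x + h) by linarith) (by ring)
  have hval : (gl l (y - x) - ({0} : Set ℝ).indicator 1 (y - x)) * -1 =
      gl l (x - y) + ({x} : Set ℝ).indicator 1 y := by
    rw [← neg_sub x y, gl_neg]
    by_cases hy : y = x <;> simp [hy, sub_eq_zero, add_comm]
  rw [hval, hasDerivWithinAt_iff_tendsto_slope, Iic_sdiff_right] at hd
  refine hd.congr fun h => ?_
  simp only [slope_def_field, Function.comp_apply, sub_zero, add_zero]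

end Kernel

/-- Let `μ` be a finite Borel measure on `ℝ` and `λ > 0`, and set
`F(x) = ∫_ℝ G_λ(y − x) μ(dy)`. Then for every `x`, `F` has a left derivative at `x` equal to
`∫_ℝ g_λ(x − y) μ(dy) + μ({x})`. -/
theorem integral_Gl_left_deriv (μ : Measure ℝ) [IsFiniteMeasure μ] (l : ℝ) (hl : 0 < l)
    (x : ℝ) :
    Tendsto (fun h : ℝ => ((∫ y, Gl l (y - (x + h)) ∂μ) - ∫ y, Gl l (y - x) ∂μ) / h)
      (nhdsWithin 0 (Set.Iio 0))
      (nhds ((∫ y, gl l (x - y) ∂μ) + (μ {x}).toReal)) := by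
  have hGl := lipschitzWith_Gl hl
  have htranslate (y : ℝ) : LipschitzWith 1 fun c => Gl l (y - c) :=
    .of_dist_le_mul fun c c' => by
      simpa only [dist_sub_left] using hGl.dist_le_mul (y - c) (y - c')
  have hint (c : ℝ) : Integrable (fun y => Gl l (y - c)) μ :=
    .of_bound (hGl.continuous.comp (continuous_sub_right c)).aestronglyMeasurable _
      (ae_of_all _ fun y => norm_Gl_le hl.le _)
  have hgl : Integrable (fun y => gl l (x - y)) μ :=
    .of_bound ((measurable_gl l).comp (measurable_const.sub measurable_id)).aestronglyMeasurable 1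
      (ae_of_all _ fun y => abs_gl_le_one _)
  have hslope := tendsto_slope_integral_of_lipschitzWith htranslate hint
    (ae_of_all μ (tendsto_slope_Gl_sub_nhdsLT hl x))
  have hatom : Integrable (({x} : Set ℝ).indicator (1 : ℝ → ℝ)) μ :=
    (integrable_const 1).indicator (measurableSet_singleton x)
  rwa [integral_add hgl hatom, integral_indicator_one (measurableSet_singleton x),
    measureReal_def] at hslope
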